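/- arXiv:1803.10944 — 3 statements merged into one kernel-verified Lean document; each statement's English description precedes it below -/
import Mathlib

section
/- For positive invertible operators A, B, the relative operator entropy satisfies A - AB⁻¹A ≤ S(A|B) ≤ B - A. -/
open scoped Real

variable {H : Type*} [NormedAddCommGroup H] [InnerProductSpace ℂ H] [CompleteSpace H]

/-- Square root via continuous functional calculus. -/
noncomputable def opSqrt (A : H →L[ℂ] H) : H →L[ℂ] H := cfc Real.sqrt A

/-- Real power via continuous functional calculus. -/
noncomputable def opRpow (A : H →L[ℂ] H) (p : ℝ) : H →L[ℂ] H :=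
  cfc (fun x : ℝ => x ^ p) A

/-- Logarithm via continuous functional calculus. -/
noncomputable def opLog (A : H →L[ℂ] H) : H →L[ℂ] H := cfc Real.log A

/-- Operator inverse (junk value `0` if not invertible). -/
noncomputable def opInv (A : H →L[ℂ] H) : H →L[ℂ] H := Ring.inverse A

/-- `A^{-1/2}`. -/
noncomputable def opInvSqrt (A : H →L[ℂ] H) : H →L[ℂ] H := opInv (opSqrt A)

/-- Weighted arithmetic mean `A ∇ₚ B`. -/
noncomputable def wNabla (p : ℝ) (A B : H →L[ℂ] H) : H →L[ℂ] H := (1 - p) • A + p • B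

/-- Weighted harmonic mean `A !ₚ B`. -/
noncomputable def wHarm (p : ℝ) (A B : H →L[ℂ] H) : H →L[ℂ] H :=
  opInv ((1 - p) • opInv A + p • opInv B)

/-- Weighted geometric mean `A ♯ₚ B`. -/
noncomputable def wGeom (p : ℝ) (A B : H →L[ℂ] H) : H →L[ℂ] H :=
  opSqrt A * opRpow (opInvSqrt A * B * opInvSqrt A) p * opSqrt A

/-- Relative operator entropy `S(A|B)`. -/
noncomputable def relEntropy (A B : H →L[ℂ] H) : H →L[ℂ] H :=
  opSqrt A * opLog (opInvSqrt A * B * opInvSqrt A) * opSqrt A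

/-- Furuta parametric relative operator entropy `Sₚ(A|B)`. -/
noncomputable def furutaEntropy (p : ℝ) (A B : H →L[ℂ] H) : H →L[ℂ] H :=
  opSqrt A * (opRpow (opInvSqrt A * B * opInvSqrt A) p *
    opLog (opInvSqrt A * B * opInvSqrt A)) * opSqrt A

/-- Tsallis relative operator entropy `Tₚ(A|B)`. -/
noncomputable def tsallisEntropy (p : ℝ) (A B : H →L[ℂ] H) : H →L[ℂ] H :=
  p⁻¹ • (wGeom p A B - A)
section ProofAux

variable {H : Type*} [NormedAddCommGroup H] [InnerProductSpace ℂ H] [CompleteSpace H]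

private lemma ring_inverse_eq_of_mul_eq_one {R : Type*} [Ring R] {u x : R}
    (hu : IsUnit u) (h : u * x = 1) : Ring.inverse u = x := by
  calc Ring.inverse u = Ring.inverse u * (u * x) := by rw [h, mul_one]
    _ = (Ring.inverse u * u) * x := by rw [mul_assoc]
    _ = x := by rw [Ring.inverse_mul_cancel u hu, one_mul]

end ProofAux

/-- For positive invertible `A, B`: `A - AB⁻¹A ≤ S(A|B) ≤ B - A`. -/
theorem relEntropy_bounds (A B : H →L[ℂ] H) (hA : 0 ≤ A) (hA' : IsUnit A)
    (hB : 0 ≤ B) (hB' : IsUnit B) :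
    A - A * opInv B * A ≤ relEntropy A B ∧ relEntropy A B ≤ B - A := by
  have hAsa : IsSelfAdjoint A := .of_nonneg hA
  have hApos : ∀ x ∈ spectrum ℝ A, 0 < x := by
    intro x hx
    refine lt_of_le_of_ne (spectrum_nonneg_of_nonneg hA hx) ?_
    rintro rfl
    exact spectrum.zero_notMem ℝ hA' hx
  set sa : H →L[ℂ] H := opSqrt A with hsa_def
  have hsqrt_ne : ∀ x ∈ spectrum ℝ A, Real.sqrt x ≠ 0 := fun x hx =>
    ne_of_gt (Real.sqrt_pos.mpr (hApos x hx))
  have hsaU : IsUnit sa := isUnit_cfc Real.sqrt A (by fun_prop) hAsa hsqrt_ne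
  have hsa0 : 0 ≤ sa := cfc_nonneg fun x _ => Real.sqrt_nonneg x
  have hsa_sa : IsSelfAdjoint sa := .of_nonneg hsa0
  have hsq : sa * sa = A := by
    rw [hsa_def, opSqrt, ← cfc_mul ..]
    calc cfc (fun x => Real.sqrt x * Real.sqrt x) A
        = cfc (id : ℝ → ℝ) A :=
          cfc_congr fun x hx => Real.mul_self_sqrt (hApos x hx).le
      _ = A := cfc_id ℝ A
  set isa : H →L[ℂ] H := opInvSqrt A with hisa_def
  have hisa_eq : isa = Ring.inverse sa := rfl
  have h1 : sa * isa = 1 := by rw [hisa_eq]; exact Ring.mul_inverse_cancel sa hsaU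
  have h2 : isa * sa = 1 := by rw [hisa_eq]; exact Ring.inverse_mul_cancel sa hsaU
  have hisa0 : 0 ≤ isa := by
    have : cfc (fun x => (Real.sqrt x)⁻¹) A = Ring.inverse (cfc Real.sqrt A) :=
      cfc_inv Real.sqrt A hsqrt_ne
    rw [hisa_eq, hsa_def, opSqrt, ← this]
    exact cfc_nonneg fun x _ => by positivity
  have hisa_sa : IsSelfAdjoint isa := .of_nonneg hisa0
  set C : H →L[ℂ] H := isa * B * isa with hC_def
  have hC0 : 0 ≤ C := by
    have := conjugate_le_conjugate_of_nonneg (le_of_eq rfl : B ≤ B) hisa0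
    calc (0 : H →L[ℂ] H) = isa * 0 * isa := by simp
      _ ≤ isa * B * isa := conjugate_le_conjugate_of_nonneg hB hisa0
  have hCsa : IsSelfAdjoint C := .of_nonneg hC0
  have hisaU : IsUnit isa := ⟨⟨isa, sa, h2, h1⟩, rfl⟩
  have hCU : IsUnit C := (hisaU.mul hB').mul hisaU
  have hCpos : ∀ x ∈ spectrum ℝ C, 0 < x := by
    intro x hx
    refine lt_of_le_of_ne (spectrum_nonneg_of_nonneg hC0 hx) ?_
    rintro rfl
    exact spectrum.zero_notMem ℝ hCU hx
  have hC_ne : (0 : ℝ) ∉ spectrum ℝ C := spectrum.zero_notMem ℝ hCU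
  have hcont_inv : ContinuousOn (fun x : ℝ => x⁻¹) (spectrum ℝ C) :=
    continuousOn_inv₀.mono <| by
      intro x hx; exact ne_of_gt (hCpos x hx)
  have hcont_log : ContinuousOn Real.log (spectrum ℝ C) :=
    Real.continuousOn_log.mono <| by
      intro x hx; simpa using ne_of_gt (hCpos x hx)
  -- scalar inequalities transferred via cfc
  have hlog_le : cfc Real.log C ≤ cfc (fun x : ℝ => x - 1) C :=
    cfc_mono (fun x hx => Real.log_le_sub_one_of_pos (hCpos x hx)) hcont_log (by fun_prop)
  have hle_log : cfc (fun x : ℝ => 1 - x⁻¹) C ≤ cfc Real.log C :=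
    cfc_mono (fun x hx => Real.one_sub_inv_le_log_of_pos (hCpos x hx))
      (by exact (continuousOn_const.sub hcont_inv)) hcont_log
  have hid : cfc (fun x : ℝ => x - 1) C = C - 1 := by
    rw [cfc_sub (fun x : ℝ => x) (fun _ : ℝ => 1) C (by fun_prop) (by fun_prop),
      cfc_id' ℝ C, cfc_const_one ℝ C]
  have hinv_eq : cfc (fun x : ℝ => 1 - x⁻¹) C = 1 - Ring.inverse C := by
    rw [cfc_sub (fun _ : ℝ => 1) (fun x : ℝ => x⁻¹) C (by fun_prop) hcont_inv,
      cfc_const_one ℝ C]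
    congr 1
    have := cfc_inv (id : ℝ → ℝ) C (fun x hx => ne_of_gt (hCpos x hx))
      (continuousOn_id) hCsa
    simpa [cfc_id ℝ C] using this
  -- conjugation by sa
  have hconj_le : sa * cfc Real.log C * sa ≤ sa * (C - 1) * sa := by
    rw [← hid]; exact hsa_sa.conjugate_le_conjugate hlog_le
  have hle_conj : sa * (1 - Ring.inverse C) * sa ≤ sa * cfc Real.log C * sa := by
    rw [← hinv_eq]; exact hsa_sa.conjugate_le_conjugate hle_log
  -- identify the terms
  have hkey : ∀ X : H →L[ℂ] H, sa * (isa * X * isa) * sa = X := by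
    intro X
    calc sa * (isa * X * isa) * sa = (sa * isa) * X * (isa * sa) := by
          simp only [mul_assoc]
      _ = X := by rw [h1, h2, one_mul, mul_one]
  have hright : sa * (C - 1) * sa = B - A := by
    rw [mul_sub, sub_mul, mul_one, hsq, hC_def, hkey]
  have hCinv : Ring.inverse C = sa * opInv B * sa := by
    refine ring_inverse_eq_of_mul_eq_one hCU ?_
    have hBinv : B * opInv B = 1 := Ring.mul_inverse_cancel B hB'
    calc C * (sa * opInv B * sa)
        = isa * (B * ((isa * sa) * (opInv B * sa))) := by
          rw [hC_def]; simp only [mul_assoc]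
      _ = isa * (B * (opInv B * sa)) := by rw [h2, one_mul]
      _ = isa * ((B * opInv B) * sa) := by rw [mul_assoc]
      _ = isa * sa := by rw [hBinv, one_mul]
      _ = 1 := h2
  have hleft : sa * (1 - Ring.inverse C) * sa = A - A * opInv B * A := by
    rw [mul_sub, sub_mul, mul_one, hsq, hCinv]
    congr 1
    calc sa * (sa * opInv B * sa) * sa = (sa * sa) * opInv B * (sa * sa) := by
          simp only [mul_assoc]
      _ = A * opInv B * A := by rw [hsq]
  refine ⟨?_, ?_⟩
  · rw [← hleft]
    exact hle_conj
  · rw [← hright]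
    exact hconj_le
end

section
/- For positive invertible operators A, B, any invertible bounded operator T, the transformer identity T* S(A|B) T = S(T*AT | T*BT) holds for the relative operator entropy. -/
open scoped Real

variable {H : Type*} [NormedAddCommGroup H] [InnerProductSpace ℂ H] [CompleteSpace H]

/-!
Write `a = A^{1/2}` and `b = (T*AT)^{1/2}`. The factors `c = T* a` and `b` of `T*AT` satisfy
`c c* = b b*`, so `u = b⁻¹ c` is unitary, and `c⁻¹ (T*BT) c*⁻¹ = a⁻¹ B a⁻¹`. Since the continuous
functional calculus commutes with unitary conjugation, `c log(a⁻¹Ba⁻¹) c* = b log(b⁻¹ T*BT b⁻¹) b*`.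
-/

lemma Ring.mul_inverse_mul_mul_inverse_mul_cancel {R : Type*} [MonoidWithZero R] {a : R}
    (ha : IsUnit a) (x : R) : a * (Ring.inverse a * x * Ring.inverse a) * a = x := by
  simp only [← mul_assoc, Ring.mul_inverse_cancel _ ha, one_mul]
  rw [mul_assoc, Ring.inverse_mul_cancel _ ha, mul_one]

lemma inverse_mul_mem_unitary_of_mul_star_eq {R : Type*} [MonoidWithZero R] [StarMul R]
    {c d : R} (hc : IsUnit c) (hd : IsUnit d) (hcd : c * star c = d * star d) :
    Ring.inverse d * c ∈ unitary R := by
  refine (hd.ringInverse.mul hc).mem_unitary_iff_mul_star_self.mpr ?_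
  refine hd.mul_left_cancel (hd.star.mul_right_cancel ?_)
  calc d * (Ring.inverse d * c * star (Ring.inverse d * c)) * star d
      = d * (Ring.inverse d * (c * star c)) * star (d * Ring.inverse d) := by
        simp only [star_mul, mul_assoc]
    _ = d * 1 * star d := by
        rw [hcd, Ring.mul_inverse_cancel_left _ _ hd, Ring.mul_inverse_cancel _ hd, star_one,
          mul_one, mul_one]

section CStarAlgebra

variable {A : Type*} [CStarAlgebra A]

lemma cfc_star_left_conjugate_of_mem_unitary {u : A} (hu : u ∈ unitary A) (f : ℝ → ℝ) (x : A) :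
    cfc f (star u * x * u) = star u * cfc f x * u := by
  by_cases hx : IsSelfAdjoint x
  · by_cases hf : ContinuousOn f (spectrum ℝ x)
    · exact (StarAlgHom.map_cfc (S := ℂ) (Unitary.conjStarAlgAut ℂ A ⟨u, hu⟩).symm.toStarAlgHom
        f x hf (show Continuous fun y : A => star u * y * u by fun_prop) hx (hx.conjugate' _)).symm
    · have hf' : ¬ ContinuousOn f (spectrum ℝ (star u * x * u)) :=
        Unitary.spectrum_star_left_conjugate (R := ℝ) (a := x) (U := ⟨u, hu⟩) ▸ hf
      rw [cfc_apply_of_not_continuousOn _ hf, cfc_apply_of_not_continuousOn _ hf', mul_zero,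
        zero_mul]
  · have hux : ¬ IsSelfAdjoint (star u * x * u) := fun h => hx <| by
      have := h.conjugate u
      rwa [← mul_assoc, ← mul_assoc, Unitary.mul_star_self_of_mem hu, one_mul, mul_assoc,
        Unitary.mul_star_self_of_mem hu, mul_one] at this
    rw [cfc_apply_of_not_predicate _ hx, cfc_apply_of_not_predicate _ hux, mul_zero, zero_mul]

lemma mul_cfc_mul_star_eq_of_mul_star_eq {c d y z : A}
    (hc : IsUnit c) (hd : IsUnit d) (hcd : c * star c = d * star d)
    (hyz : c * y * star c = d * z * star d) (f : ℝ → ℝ) :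
    c * cfc f y * star c = d * cfc f z * star d := by
  obtain ⟨u, hu, rfl⟩ : ∃ u ∈ unitary A, d * u = c :=
    ⟨_, inverse_mul_mem_unitary_of_mul_star_eq hc hd hcd, Ring.mul_inverse_cancel_left d c hd⟩
  have hz : u * y * star u = z := by
    refine hd.mul_left_cancel (hd.star.mul_right_cancel ?_)
    simpa only [star_mul, mul_assoc] using hyz
  calc d * u * cfc f y * star (d * u)
      = d * u * cfc f (star u * (u * y * star u) * u) * star (d * u) := by
        simp only [← mul_assoc, Unitary.star_mul_self_of_mem hu, one_mul]
        simp only [mul_assoc, Unitary.star_mul_self_of_mem hu, mul_one]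
    _ = d * (u * star u) * cfc f z * (u * star u) * star d := by
        rw [hz, cfc_star_left_conjugate_of_mem_unitary hu, star_mul]
        simp only [mul_assoc]
    _ = d * cfc f z * star d := by
        rw [Unitary.mul_star_self_of_mem hu, mul_one, mul_one]

lemma transformer_cfc_of_mul_self_eq {a b t : A} (ha : IsSelfAdjoint a) (hb : IsSelfAdjoint b)
    (ha' : IsUnit a) (hb' : IsUnit b) (ht : IsUnit t) (hab : b * b = star t * (a * a) * t)
    (f : ℝ → ℝ) (x : A) :
    star t * (a * cfc f (Ring.inverse a * x * Ring.inverse a) * a) * t =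
      b * cfc f (Ring.inverse b * (star t * x * t) * Ring.inverse b) * b := by
  have hc : star t * a * star (star t * a) = b * star b := by
    rw [star_mul, star_star, ha.star_eq, hb.star_eq, hab]
    simp only [mul_assoc]
  have hyz : star t * a * (Ring.inverse a * x * Ring.inverse a) * star (star t * a) =
      b * (Ring.inverse b * (star t * x * t) * Ring.inverse b) * star b := by
    calc star t * a * (Ring.inverse a * x * Ring.inverse a) * star (star t * a)
        = star t * (a * (Ring.inverse a * x * Ring.inverse a) * a) * t := by
          rw [star_mul, star_star, ha.star_eq]
          simp only [mul_assoc]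
      _ = b * (Ring.inverse b * (star t * x * t) * Ring.inverse b) * star b := by
          rw [hb.star_eq, Ring.mul_inverse_mul_mul_inverse_mul_cancel ha',
            Ring.mul_inverse_mul_mul_inverse_mul_cancel hb']
  calc star t * (a * cfc f (Ring.inverse a * x * Ring.inverse a) * a) * t
      = star t * a * cfc f (Ring.inverse a * x * Ring.inverse a) * star (star t * a) := by
        rw [star_mul, star_star, ha.star_eq]
        simp only [mul_assoc]
    _ = b * cfc f (Ring.inverse b * (star t * x * t) * Ring.inverse b) * b := by
        rw [mul_cfc_mul_star_eq_of_mul_star_eq (ht.star.mul ha') hb' hc hyz, hb.star_eq]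

end CStarAlgebra

lemma isSelfAdjoint_opSqrt (A : H →L[ℂ] H) : IsSelfAdjoint (opSqrt A) :=
  cfc_predicate _ _

lemma opSqrt_mul_self {A : H →L[ℂ] H} (hA : 0 ≤ A) : opSqrt A * opSqrt A = A := by
  rw [opSqrt, ← cfc_mul ..]
  conv_rhs => rw [← cfc_id (R := ℝ) A]
  exact cfc_congr fun x hx => Real.mul_self_sqrt (spectrum_nonneg_of_nonneg hA hx)

lemma isUnit_opSqrt {A : H →L[ℂ] H} (hA : 0 ≤ A) (hA' : IsUnit A) : IsUnit (opSqrt A) := by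
  refine isUnit_cfc _ _ Real.continuous_sqrt.continuousOn (.of_nonneg hA) fun x hx => ?_
  have hx0 : x ≠ 0 := fun h => (spectrum.zero_notMem_iff ℝ).mpr hA' (h ▸ hx)
  exact Real.sqrt_ne_zero'.mpr ((spectrum_nonneg_of_nonneg hA hx).lt_of_ne' hx0)

theorem relEntropy_transformer_general (A B T : H →L[ℂ] H) (hA : 0 ≤ A) (hA' : IsUnit A)
    (hT : IsUnit T) :
    ContinuousLinearMap.adjoint T * relEntropy A B * T =
      relEntropy (ContinuousLinearMap.adjoint T * A * T)
        (ContinuousLinearMap.adjoint T * B * T) := by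
  rw [← ContinuousLinearMap.star_eq_adjoint]
  have hTAT : 0 ≤ star T * A * T := star_left_conjugate_nonneg hA T
  exact transformer_cfc_of_mul_self_eq (isSelfAdjoint_opSqrt _) (isSelfAdjoint_opSqrt _)
    (isUnit_opSqrt hA hA') (isUnit_opSqrt hTAT ((hT.star.mul hA').mul hT)) hT
    (by rw [opSqrt_mul_self hA, opSqrt_mul_self hTAT]) Real.log B

/-- The transformer identity `T* S(A|B) T = S(T*AT | T*BT)` for positive
invertible `A, B` and invertible bounded `T`. -/
theorem relEntropy_transformer (A B T : H →L[ℂ] H) (hA : 0 ≤ A) (hA' : IsUnit A)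
    (hB : 0 ≤ B) (hB' : IsUnit B) (hT : IsUnit T) :
    ContinuousLinearMap.adjoint T * relEntropy A B * T =
      relEntropy (ContinuousLinearMap.adjoint T * A * T)
        (ContinuousLinearMap.adjoint T * B * T) :=
  relEntropy_transformer_general A B T hA hA' hT
end

section
/- For positive invertible operators A, B and p ∈ (0,1), the Furuta parametric relative operator entropy satisfies Sₚ(A|B) = −S(A♯ₚB | A)/p = S(A♯ₚB | B)/(1−p). -/
open scoped Real

variable {H : Type*} [NormedAddCommGroup H] [InnerProductSpace ℂ H] [CompleteSpace H]

/-!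
Put `C = A^{-1/2} B A^{-1/2}` and `W = A^{1/2} C^{p/2}`. Then `A ♯ₚ B = W W*`, `A = W C^{-p} W*`,
`B = W C^{1-p} W*` and `Sₚ(A|B) = W (log C) W*`. For invertible `W`, the perspective
`X^{1/2} f(X^{-1/2} Y X^{-1/2}) X^{1/2}` of `X = W W*` and `Y = W D W*` equals `W f(D) W*`:
`U = (W W*)^{-1/2} W` is unitary with `X^{-1/2} Y X^{-1/2} = U D U*`, and unitary conjugation
commutes with the continuous functional calculus. Hence `S(W W* | W C^r W*) = W log(C^r) W* =
r Sₚ(A|B)`, and the two identities are the cases `r = -p` and `r = 1 - p`.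
-/

open CFC
open scoped Ring

section CStarAlgebra

variable {A : Type*} [CStarAlgebra A] [PartialOrder A] [StarOrderedRing A]

lemma cfc_unitary_conj (u : unitary A) (f : ℝ → ℝ) (a : A)
    (hf : ContinuousOn f (spectrum ℝ a) := by cfc_cont_tac) (ha : IsSelfAdjoint a := by cfc_tac) :
    cfc f ((u : A) * a * star (u : A)) = u * cfc f a * star (u : A) := by
  have hcont : Continuous (Unitary.conjStarAlgAut ℂ A u) := by
    show Continuous fun x => (u : A) * x * star (u : A)
    fun_prop
  exact (StarAlgHomClass.map_cfc (Unitary.conjStarAlgAut ℂ A u) f a hf hcont ha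
    (ha.conjugate (u : A))).symm

lemma CFC.log_rpow (a : A) (x : ℝ) (ha : IsStrictlyPositive a := by cfc_tac) :
    log (a ^ x) = x • log a := by
  have hlog : ContinuousOn Real.log ((· ^ x) '' spectrum ℝ a) := by
    rintro _ ⟨t, ht, rfl⟩
    exact (Real.continuousAt_log
      (Real.rpow_pos_of_pos (ha.spectrum_pos ht) x).ne').continuousWithinAt
  have hne : ∀ t ∈ spectrum ℝ a, t ≠ 0 := fun t ht => (ha.spectrum_pos ht).ne'
  rw [rpow_eq_cfc_real, log, ← cfc_comp' Real.log (· ^ x) a hlog, log, ← cfc_smul ..]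
  exact cfc_congr fun t ht => Real.log_rpow (ha.spectrum_pos ht) x

lemma CFC.rpow_mul_log_mul_rpow (a : A) (x y : ℝ) (ha : IsStrictlyPositive a := by cfc_tac) :
    a ^ x * log a * a ^ y = cfc (fun t => t ^ (x + y) * Real.log t) a := by
  have hne : ∀ t ∈ spectrum ℝ a, t ≠ 0 := fun t ht => (ha.spectrum_pos ht).ne'
  rw [rpow_eq_cfc_real, rpow_eq_cfc_real, log, ← cfc_mul .., ← cfc_mul ..]
  refine cfc_congr fun t ht => ?_
  rw [Real.rpow_add (ha.spectrum_pos ht)]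
  ring

lemma IsUnit.inverse_sqrt_mul_star_self_mul_mem_unitary {w : A} (hw : IsUnit w) :
    (sqrt (w * star w))⁻¹ʳ * w ∈ unitary A := by
  have hpos : IsStrictlyPositive (w * star w) := by
    simpa using hw.isStrictlyPositive_star_right_conjugate_iff.mpr isStrictlyPositive_one
  set s := sqrt (w * star w)
  have hs : IsUnit s := hpos.isUnit_cfcSqrt
  have hs_sa : IsSelfAdjoint s⁻¹ʳ := (sqrt_nonneg _).isSelfAdjoint.ringInverse
  refine ((isUnit_ringInverse.mpr hs).mul hw).mem_unitary_of_mul_star_self ?_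
  calc s⁻¹ʳ * w * star (s⁻¹ʳ * w) = s⁻¹ʳ * (s * s) * s⁻¹ʳ := by
        rw [star_mul, hs_sa.star_eq, sqrt_mul_sqrt_self _ hpos.nonneg]; simp only [mul_assoc]
    _ = 1 := by
        rw [← mul_assoc, Ring.inverse_mul_cancel _ hs, one_mul, Ring.mul_inverse_cancel _ hs]

noncomputable def perspective (f : ℝ → ℝ) (a b : A) : A :=
  sqrt a * cfc f ((sqrt a)⁻¹ʳ * b * (sqrt a)⁻¹ʳ) * sqrt a

lemma perspective_mul_star_self {w : A} (hw : IsUnit w) (f : ℝ → ℝ) (d : A)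
    (hf : ContinuousOn f (spectrum ℝ d) := by cfc_cont_tac) (hd : IsSelfAdjoint d := by cfc_tac) :
    perspective f (w * star w) (w * d * star w) = w * cfc f d * star w := by
  have hu := hw.inverse_sqrt_mul_star_self_mul_mem_unitary
  set s := sqrt (w * star w)
  set u := s⁻¹ʳ * w
  have hs : IsUnit s := (isUnit_sqrt_iff _ (mul_star_self_nonneg w)).mpr (hw.mul hw.star)
  have hs_sa : IsSelfAdjoint s := (sqrt_nonneg _).isSelfAdjoint
  have hsu : s * u = w := by rw [← mul_assoc, Ring.mul_inverse_cancel _ hs, one_mul]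
  have hus : star u * s = star w := by simpa [star_mul, hs_sa.star_eq] using congrArg star hsu
  have hconj : s⁻¹ʳ * (w * d * star w) * s⁻¹ʳ = u * d * star u := by
    rw [star_mul, hs_sa.ringInverse.star_eq]; simp only [u, mul_assoc]
  calc perspective f (w * star w) (w * d * star w)
      = s * (u * cfc f d * star u) * s := by
        rw [perspective, hconj, ← cfc_unitary_conj ⟨u, hu⟩ f d hf hd]
    _ = (s * u) * cfc f d * (star u * s) := by simp only [mul_assoc]
    _ = w * cfc f d * star w := by rw [hsu, hus]

lemma perspective_log_mul_star_self {w c : A} (hw : IsUnit w) (hc : IsStrictlyPositive c)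
    (r : ℝ) :
    perspective Real.log (w * star w) (w * c ^ r * star w) = r • (w * log c * star w) := by
  have hne : ∀ t ∈ spectrum ℝ (c ^ r), t ≠ 0 := fun t ht => ((hc.rpow c r).spectrum_pos ht).ne'
  rw [perspective_mul_star_self hw Real.log (c ^ r), ← log, log_rpow c r, mul_smul_comm,
    smul_mul_assoc]

variable {a b : A}

lemma inverse_sqrt_conj_nonneg (hb : 0 ≤ b) : 0 ≤ (sqrt a)⁻¹ʳ * b * (sqrt a)⁻¹ʳ :=
  (sqrt_nonneg a).isSelfAdjoint.ringInverse.conjugate_nonneg hb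

lemma isStrictlyPositive_inverse_sqrt_conj (ha : IsStrictlyPositive a)
    (hb : IsStrictlyPositive b) : IsStrictlyPositive ((sqrt a)⁻¹ʳ * b * (sqrt a)⁻¹ʳ) :=
  hb.conjugate_of_isUnit_of_isSelfAdjoint b _ (isUnit_ringInverse.mpr ha.isUnit_cfcSqrt)
    (sqrt_nonneg a).isSelfAdjoint.ringInverse

lemma perspective_nonneg {f : ℝ → ℝ} (hf : ∀ t, 0 ≤ t → 0 ≤ f t) (a : A) (hb : 0 ≤ b) :
    0 ≤ perspective f a b :=
  (sqrt_nonneg a).isSelfAdjoint.conjugate_nonneg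
    (cfc_nonneg fun t ht => hf t (spectrum_nonneg_of_nonneg (inverse_sqrt_conj_nonneg hb) ht))

lemma perspective_rpow (hb : 0 ≤ b) (q : ℝ) :
    perspective (· ^ q) a b = sqrt a * ((sqrt a)⁻¹ʳ * b * (sqrt a)⁻¹ʳ) ^ q * sqrt a := by
  rw [perspective, rpow_eq_cfc_real (inverse_sqrt_conj_nonneg hb)]

lemma perspective_rpow_zero (ha : 0 ≤ a) (hb : 0 ≤ b) : perspective (· ^ (0 : ℝ)) a b = a := by
  rw [perspective_rpow hb, rpow_zero _ (inverse_sqrt_conj_nonneg hb), mul_one,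
    sqrt_mul_sqrt_self a ha]

lemma perspective_rpow_one (ha : IsStrictlyPositive a) (hb : 0 ≤ b) :
    perspective (· ^ (1 : ℝ)) a b = b := by
  have hs := ha.isUnit_cfcSqrt
  rw [perspective_rpow hb, rpow_one _ (inverse_sqrt_conj_nonneg hb)]
  simp only [mul_assoc, Ring.inverse_mul_cancel _ hs, mul_one]
  rw [← mul_assoc, Ring.mul_inverse_cancel _ hs, one_mul]

lemma perspective_log_perspective_rpow (ha : IsStrictlyPositive a) (hb : IsStrictlyPositive b)
    (p r : ℝ) :
    perspective Real.log (perspective (· ^ p) a b) (perspective (· ^ (p + r)) a b) =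
      r • perspective (fun t => t ^ p * Real.log t) a b := by
  set c := (sqrt a)⁻¹ʳ * b * (sqrt a)⁻¹ʳ
  have hc : IsStrictlyPositive c := isStrictlyPositive_inverse_sqrt_conj ha hb
  set w := sqrt a * c ^ (p / 2)
  have hw : IsUnit w := ha.isUnit_cfcSqrt.mul (hc.isUnit.cfcRpow _)
  have hstar : star w = c ^ (p / 2) * sqrt a := by
    rw [star_mul, (sqrt_nonneg a).isSelfAdjoint.star_eq, rpow_nonneg.isSelfAdjoint.star_eq]
  have hconj (q : ℝ) : perspective (· ^ (p + q)) a b = w * c ^ q * star w := by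
    rw [perspective_rpow hb.nonneg, hstar, show p + q = p / 2 + q + p / 2 by ring,
      rpow_add hc.isUnit, rpow_add hc.isUnit]
    simp only [w, mul_assoc]
  have hgeom : perspective (· ^ p) a b = w * star w := by
    simpa [rpow_zero c hc.nonneg] using hconj 0
  have hfuruta : perspective (fun t => t ^ p * Real.log t) a b = w * log c * star w := by
    rw [perspective, ← add_halves p, ← rpow_mul_log_mul_rpow c, hstar]
    simp only [w, mul_assoc]
  rw [hgeom, hconj, hfuruta, perspective_log_mul_star_self hw hc]

lemma perspective_log_perspective_rpow_left (ha : IsStrictlyPositive a)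
    (hb : IsStrictlyPositive b) (p : ℝ) :
    perspective Real.log (perspective (· ^ p) a b) a =
      -p • perspective (fun t => t ^ p * Real.log t) a b := by
  have h := perspective_log_perspective_rpow ha hb p (-p)
  rwa [add_neg_cancel, perspective_rpow_zero ha.nonneg hb.nonneg] at h

lemma perspective_log_perspective_rpow_right (ha : IsStrictlyPositive a)
    (hb : IsStrictlyPositive b) (p : ℝ) :
    perspective Real.log (perspective (· ^ p) a b) b =
      (1 - p) • perspective (fun t => t ^ p * Real.log t) a b := by
  have h := perspective_log_perspective_rpow ha hb p (1 - p)
  rwa [add_sub_cancel, perspective_rpow_one ha hb.nonneg] at h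

end CStarAlgebra

section ContinuousLinearMap

variable {A B : H →L[ℂ] H}

lemma opSqrt_eq_sqrt (hA : 0 ≤ A) : opSqrt A = sqrt A := by
  rw [opSqrt, sqrt_eq_real_sqrt A, cfcₙ_eq_cfc]

lemma relEntropy_eq_perspective (hA : 0 ≤ A) (B : H →L[ℂ] H) :
    relEntropy A B = perspective Real.log A B := by
  rw [relEntropy, opInvSqrt, opInv, opLog, opSqrt_eq_sqrt hA, perspective]

lemma wGeom_eq_perspective (p : ℝ) (hA : 0 ≤ A) (B : H →L[ℂ] H) :
    wGeom p A B = perspective (· ^ p) A B := by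
  rw [wGeom, opInvSqrt, opInv, opRpow, opSqrt_eq_sqrt hA, perspective]

lemma furutaEntropy_eq_perspective (p : ℝ) (hA : IsStrictlyPositive A)
    (hB : IsStrictlyPositive B) :
    furutaEntropy p A B = perspective (fun t => t ^ p * Real.log t) A B := by
  have hc := isStrictlyPositive_inverse_sqrt_conj hA hB
  have hne : ∀ t ∈ spectrum ℝ ((sqrt A)⁻¹ʳ * B * (sqrt A)⁻¹ʳ), t ≠ 0 := fun t ht =>
    (hc.spectrum_pos ht).ne'
  rw [furutaEntropy, opInvSqrt, opInv, opRpow, opLog, opSqrt_eq_sqrt hA.nonneg, perspective,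
    ← cfc_mul (· ^ p) Real.log _ (continuousOn_id.rpow_const fun t ht => .inl (hne t ht))
      (Real.continuousOn_log.mono hne)]

end ContinuousLinearMap

/-- `Sₚ(A|B) = −S(A♯ₚB|A)/p = S(A♯ₚB|B)/(1−p)` for positive invertible
`A, B` and `p ∈ (0,1)`. -/
theorem furutaEntropy_eq_relEntropy_geom (A B : H →L[ℂ] H) (hA : 0 ≤ A)
    (hA' : IsUnit A) (hB : 0 ≤ B) (hB' : IsUnit B) (p : ℝ)
    (hp : p ∈ Set.Ioo (0:ℝ) 1) :
    furutaEntropy p A B = -(p⁻¹ • relEntropy (wGeom p A B) A) ∧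
      furutaEntropy p A B = (1 - p)⁻¹ • relEntropy (wGeom p A B) B := by
  have hApos : IsStrictlyPositive A := hA'.isStrictlyPositive hA
  have hBpos : IsStrictlyPositive B := hB'.isStrictlyPositive hB
  have hG : 0 ≤ wGeom p A B :=
    wGeom_eq_perspective p hA B ▸ perspective_nonneg (fun t ht => Real.rpow_nonneg ht p) A hB
  rw [relEntropy_eq_perspective hG, relEntropy_eq_perspective hG, wGeom_eq_perspective p hA,
    perspective_log_perspective_rpow_left hApos hBpos,
    perspective_log_perspective_rpow_right hApos hBpos, smul_smul, smul_smul, mul_neg,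
    inv_mul_cancel₀ hp.1.ne', inv_mul_cancel₀ (sub_ne_zero.2 hp.2.ne'), neg_smul, one_smul,
    neg_neg, furutaEntropy_eq_perspective p hApos hBpos]
  exact ⟨rfl, rfl⟩
end
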